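/- (Expansion of the rescaled angular momentum, equation (6.29).) Let v_c ∈ ℝ and let η: ℝ → ℝ be a continuous 2π-periodic function with ∫₀^{2π} η(θ) dθ = ∫₀^{2π} η(θ)cos(2θ) dθ = ∫₀^{2π} η(θ)sin(2θ) dθ = 0. Then 𝒥( v_c·𝚌₂ + η ) = v_c·( 1 + (1/π)·∫₀^{2π} η(θ)cos(4θ) dθ ) + α·v_c² + ℵ·∫₀^{2π} η(θ)²·g_γ(θ) dθ, where α := (γ²+1)√2/((γ²−1)√π). -/

import Mathlib

open Real MeasureTheory

/-- `g_γ(θ) := γ cos²θ + γ⁻¹ sin²θ`. -/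
noncomputable def gell (γ θ : ℝ) : ℝ := γ * Real.cos θ ^ 2 + γ⁻¹ * Real.sin θ ^ 2

/-- `ℵ := √2/(√π (γ − γ⁻¹))`. -/
noncomputable def aleph (γ : ℝ) : ℝ := Real.sqrt 2 / (Real.sqrt π * (γ - γ⁻¹))

/-- The rescaled angular momentum
`𝒥(ξ) := ℵ ∫₀^{2π} ξ g_γ dθ + ℵ ∫₀^{2π} ξ² g_γ dθ`. -/
noncomputable def Jcal (γ : ℝ) (ξ : ℝ → ℝ) : ℝ :=
  aleph γ * (∫ θ in (0:ℝ)..(2 * π), ξ θ * gell γ θ) +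
    aleph γ * (∫ θ in (0:ℝ)..(2 * π), (ξ θ) ^ 2 * gell γ θ)

/-- `𝚌₂(θ) := √(2/π) cos(2θ)`. -/
noncomputable def c2fun (θ : ℝ) : ℝ := Real.sqrt (2 / π) * Real.cos (2 * θ)

/-! Writing `g_γ(θ) = (γ + γ⁻¹)/2 + (γ − γ⁻¹)/2 · cos 2θ`, every integral in `𝒥(v 𝚌₂ + η)`
reduces to period integrals of `cos^k 2θ` (`k ≤ 3`) and of `η` against `1`, `cos 2θ` and
`cos² 2θ = (1 + cos 4θ)/2`. The orthogonality of `η` to `1` and `cos 2θ` kills every term linear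
in `η` except the `cos 4θ` moment; the remaining constants are `ℵ √(2/π) (γ − γ⁻¹)/2 = 1/π` and
`ℵ (γ + γ⁻¹) = α`. -/

theorem integral_cos_nat_mul_eq_zero {n : ℕ} (hn : n ≠ 0) :
    ∫ θ in (0:ℝ)..2 * π, cos (n * θ) = 0 := by
  rw [intervalIntegral.integral_comp_mul_left cos (Nat.cast_ne_zero.mpr hn), integral_cos,
    mul_zero, sin_zero, sub_zero, show (n : ℝ) * (2 * π) = (2 * n : ℕ) * π by push_cast; ring,
    sin_nat_mul_pi, smul_zero]

theorem integral_cos_two_mul_eq_zero : ∫ θ in (0:ℝ)..2 * π, cos (2 * θ) = 0 := by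
  exact_mod_cast integral_cos_nat_mul_eq_zero two_ne_zero

theorem cos_two_mul_sq (θ : ℝ) : cos (2 * θ) ^ 2 = 1 / 2 + cos (4 * θ) / 2 := by
  rw [cos_sq, ← mul_assoc]
  norm_num

theorem integral_cos_two_mul_sq : ∫ θ in (0:ℝ)..2 * π, cos (2 * θ) ^ 2 = π := by
  have h4 : ∫ θ in (0:ℝ)..2 * π, cos (4 * θ) = 0 := by
    exact_mod_cast integral_cos_nat_mul_eq_zero (n := 4) (by norm_num)
  simp_rw [cos_two_mul_sq]
  rw [intervalIntegral.integral_add intervalIntegrable_const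
    (Continuous.intervalIntegrable (by fun_prop) _ _)]
  simp [h4]
  ring

theorem integral_cos_two_mul_pow_three : ∫ θ in (0:ℝ)..2 * π, cos (2 * θ) ^ 3 = 0 := by
  have h6 : ∫ θ in (0:ℝ)..2 * π, cos (6 * θ) = 0 := by
    exact_mod_cast integral_cos_nat_mul_eq_zero (n := 6) (by norm_num)
  have hpow (θ : ℝ) : cos (2 * θ) ^ 3 = 3 / 4 * cos (2 * θ) + cos (6 * θ) / 4 := by
    rw [show 6 * θ = 3 * (2 * θ) by ring, cos_three_mul]
    ring
  simp_rw [hpow]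
  rw [intervalIntegral.integral_add (Continuous.intervalIntegrable (by fun_prop) _ _)
      (Continuous.intervalIntegrable (by fun_prop) _ _),
    intervalIntegral.integral_const_mul, intervalIntegral.integral_div,
    integral_cos_two_mul_eq_zero, h6]
  simp

theorem gell_eq (γ θ : ℝ) :
    gell γ θ = (γ + γ⁻¹) / 2 + (γ - γ⁻¹) / 2 * cos (2 * θ) := by
  rw [gell, sin_sq, cos_sq]
  ring

@[fun_prop]
theorem continuous_gell (γ : ℝ) : Continuous (gell γ) := by
  unfold gell
  fun_prop

section

variable {f : ℝ → ℝ} (hf : Continuous f)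
include hf

theorem integral_mul_gell (γ : ℝ) :
    ∫ θ in (0:ℝ)..2 * π, f θ * gell γ θ =
      (γ + γ⁻¹) / 2 * (∫ θ in (0:ℝ)..2 * π, f θ) +
        (γ - γ⁻¹) / 2 * ∫ θ in (0:ℝ)..2 * π, f θ * cos (2 * θ) := by
  simp_rw [gell_eq, mul_add, mul_left_comm _ ((γ - γ⁻¹) / 2)]
  rw [intervalIntegral.integral_add (Continuous.intervalIntegrable (by fun_prop) _ _)
      (Continuous.intervalIntegrable (by fun_prop) _ _),
    intervalIntegral.integral_mul_const, intervalIntegral.integral_const_mul, mul_comm]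

theorem integral_mul_cos_two_mul_sq :
    ∫ θ in (0:ℝ)..2 * π, f θ * cos (2 * θ) ^ 2 =
      (∫ θ in (0:ℝ)..2 * π, f θ) / 2 + (∫ θ in (0:ℝ)..2 * π, f θ * cos (4 * θ)) / 2 := by
  simp_rw [cos_two_mul_sq, mul_add, mul_div_assoc', mul_one]
  rw [intervalIntegral.integral_add (Continuous.intervalIntegrable (by fun_prop) _ _)
      (Continuous.intervalIntegrable (by fun_prop) _ _),
    intervalIntegral.integral_div, intervalIntegral.integral_div]

end

theorem integral_cos_two_mul_mul_gell (γ : ℝ) :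
    ∫ θ in (0:ℝ)..2 * π, cos (2 * θ) * gell γ θ = (γ - γ⁻¹) / 2 * π := by
  rw [integral_mul_gell (by fun_prop), integral_cos_two_mul_eq_zero]
  simp_rw [← sq]
  rw [integral_cos_two_mul_sq]
  ring

theorem integral_cos_two_mul_sq_mul_gell (γ : ℝ) :
    ∫ θ in (0:ℝ)..2 * π, cos (2 * θ) ^ 2 * gell γ θ = (γ + γ⁻¹) / 2 * π := by
  rw [integral_mul_gell (by fun_prop), integral_cos_two_mul_sq]
  simp_rw [← pow_succ]
  rw [integral_cos_two_mul_pow_three]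
  ring

section

variable {f : ℝ → ℝ} (hf : Continuous f) (h0 : ∫ θ in (0:ℝ)..2 * π, f θ = 0)
  (hc2 : ∫ θ in (0:ℝ)..2 * π, f θ * cos (2 * θ) = 0) (γ : ℝ)
include hf h0 hc2

theorem integral_mul_gell_eq_zero : ∫ θ in (0:ℝ)..2 * π, f θ * gell γ θ = 0 := by
  rw [integral_mul_gell hf, h0, hc2]
  ring

theorem integral_mul_cos_two_mul_mul_gell :
    ∫ θ in (0:ℝ)..2 * π, f θ * cos (2 * θ) * gell γ θ =
      (γ - γ⁻¹) / 4 * ∫ θ in (0:ℝ)..2 * π, f θ * cos (4 * θ) := by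
  rw [integral_mul_gell (f := fun θ => f θ * cos (2 * θ)) (by fun_prop), hc2]
  simp_rw [mul_assoc, ← sq]
  rw [integral_mul_cos_two_mul_sq hf, h0]
  ring

theorem integral_mul_c2fun_add_mul_gell (v : ℝ) :
    ∫ θ in (0:ℝ)..2 * π, (v * c2fun θ + f θ) * gell γ θ =
      v * √(2 / π) * ((γ - γ⁻¹) / 2 * π) := by
  simp_rw [add_mul, c2fun, mul_assoc]
  rw [intervalIntegral.integral_add (Continuous.intervalIntegrable (by fun_prop) _ _)
      (Continuous.intervalIntegrable (by fun_prop) _ _),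
    intervalIntegral.integral_const_mul, intervalIntegral.integral_const_mul,
    integral_cos_two_mul_mul_gell, integral_mul_gell_eq_zero hf h0 hc2, add_zero]

theorem integral_mul_c2fun_add_sq_mul_gell (v : ℝ) :
    ∫ θ in (0:ℝ)..2 * π, (v * c2fun θ + f θ) ^ 2 * gell γ θ =
      v ^ 2 * (2 / π) * ((γ + γ⁻¹) / 2 * π) +
        v * √(2 / π) * ((γ - γ⁻¹) / 2) * (∫ θ in (0:ℝ)..2 * π, f θ * cos (4 * θ)) +
        ∫ θ in (0:ℝ)..2 * π, f θ ^ 2 * gell γ θ := by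
  have hsq : √(2 / π) ^ 2 = 2 / π := sq_sqrt (by positivity)
  have hexpand (θ : ℝ) : (v * c2fun θ + f θ) ^ 2 * gell γ θ =
      v ^ 2 * (2 / π) * (cos (2 * θ) ^ 2 * gell γ θ) +
        2 * v * √(2 / π) * (f θ * cos (2 * θ) * gell γ θ) + f θ ^ 2 * gell γ θ := by
    rw [c2fun]
    linear_combination v ^ 2 * cos (2 * θ) ^ 2 * gell γ θ * hsq
  simp_rw [hexpand]
  rw [intervalIntegral.integral_add (Continuous.intervalIntegrable (by fun_prop) _ _)
      (Continuous.intervalIntegrable (by fun_prop) _ _),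
    intervalIntegral.integral_add (Continuous.intervalIntegrable (by fun_prop) _ _)
      (Continuous.intervalIntegrable (by fun_prop) _ _),
    intervalIntegral.integral_const_mul, intervalIntegral.integral_const_mul,
    integral_cos_two_mul_sq_mul_gell, integral_mul_cos_two_mul_mul_gell hf h0 hc2]
  ring

end

theorem aleph_mul_sqrt_two_div_pi_mul {γ : ℝ} (hd : γ - γ⁻¹ ≠ 0) :
    aleph γ * √(2 / π) * ((γ - γ⁻¹) / 2) = π⁻¹ := by
  rw [aleph, sqrt_div zero_le_two, div_mul_div_comm, mul_self_sqrt zero_le_two, mul_right_comm,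
    mul_self_sqrt pi_pos.le]
  generalize γ - γ⁻¹ = d at *
  field_simp

theorem aleph_mul_add_inv {γ : ℝ} (hγ : γ ≠ 0) :
    aleph γ * (γ + γ⁻¹) = (γ ^ 2 + 1) * √2 / ((γ ^ 2 - 1) * √π) := by
  rw [aleph, show γ - γ⁻¹ = (γ ^ 2 - 1) / γ by field_simp,
    show γ + γ⁻¹ = (γ ^ 2 + 1) / γ by field_simp]
  field_simp

theorem angular_momentum_expansion_general
    (γ : ℝ) (hγ : 1 < γ) (vc : ℝ)
    (η : ℝ → ℝ) (hcont : Continuous η)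
    (h0 : (∫ θ in (0:ℝ)..(2 * π), η θ) = 0)
    (hc2 : (∫ θ in (0:ℝ)..(2 * π), η θ * Real.cos (2 * θ)) = 0) :
    Jcal γ (fun θ => vc * c2fun θ + η θ)
      = vc * (1 + (1 / π) * ∫ θ in (0:ℝ)..(2 * π), η θ * Real.cos (4 * θ)) +
          ((γ ^ 2 + 1) * Real.sqrt 2 / ((γ ^ 2 - 1) * Real.sqrt π)) * vc ^ 2 +
          aleph γ * ∫ θ in (0:ℝ)..(2 * π), (η θ) ^ 2 * gell γ θ := by
  have hd : γ - γ⁻¹ ≠ 0 := (sub_pos.2 ((inv_lt_one_of_one_lt₀ hγ).trans hγ)).ne'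
  have hlin := aleph_mul_sqrt_two_div_pi_mul hd
  have hquad := aleph_mul_add_inv (γ := γ) (by positivity)
  have hπ : π * π⁻¹ = 1 := mul_inv_cancel₀ pi_ne_zero
  rw [Jcal, integral_mul_c2fun_add_mul_gell hcont h0 hc2,
    integral_mul_c2fun_add_sq_mul_gell hcont h0 hc2]
  linear_combination vc * (π + ∫ θ in (0:ℝ)..2 * π, η θ * cos (4 * θ)) * hlin + vc ^ 2 * hquad +
    (vc + vc ^ 2 * aleph γ * (γ + γ⁻¹)) * hπ

/-- Expansion of the rescaled angular momentum (equation (6.29));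
`α := (γ²+1)√2/((γ²−1)√π)`. -/
theorem angular_momentum_expansion
    (γ : ℝ) (hγ : 1 < γ) (vc : ℝ)
    (η : ℝ → ℝ) (hcont : Continuous η) (hper : ∀ θ, η (θ + 2 * π) = η θ)
    (h0 : (∫ θ in (0:ℝ)..(2 * π), η θ) = 0)
    (hc2 : (∫ θ in (0:ℝ)..(2 * π), η θ * Real.cos (2 * θ)) = 0)
    (hs2 : (∫ θ in (0:ℝ)..(2 * π), η θ * Real.sin (2 * θ)) = 0) :
    Jcal γ (fun θ => vc * c2fun θ + η θ)
      = vc * (1 + (1 / π) * ∫ θ in (0:ℝ)..(2 * π), η θ * Real.cos (4 * θ)) +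
          ((γ ^ 2 + 1) * Real.sqrt 2 / ((γ ^ 2 - 1) * Real.sqrt π)) * vc ^ 2 +
          aleph γ * ∫ θ in (0:ℝ)..(2 * π), (η θ) ^ 2 * gell γ θ :=
  angular_momentum_expansion_general γ hγ vc η hcont h0 hc2
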